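/- arXiv:2012.15423 — 3 statements merged into one kernel-verified Lean document; each statement's English description precedes it below -/
import Mathlib

section
/- For all positive integers n, m and every integer q ≥ 2, every matrix A ∈ Z_q^{n×m}, and every real number β with β ≥ √m · q^{n/m}, there exists a nonzero integer vector z ∈ ℤ^m with Euclidean norm ‖z‖ ≤ β such that A·(z mod q) = 0 in Z_q^n. In other words, the short integer solution problem SIS_{q,n,m,β} admits a solution whenever β ≥ √m · q^{n/m}. -/
/-- The short integer solution problem SIS_{q,n,m,β} admits a solution
whenever β ≥ √m · q^(n/m). -/
theorem sis_admits_solution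
    (n m q : ℕ) (hn : 0 < n) (hm : 0 < m) (hq : 2 ≤ q)
    (A : Matrix (Fin n) (Fin m) (ZMod q))
    (β : ℝ) (hβ : Real.sqrt m * (q : ℝ) ^ ((n : ℝ) / (m : ℝ)) ≤ β) :
    ∃ z : Fin m → ℤ, z ≠ 0 ∧
      Real.sqrt (∑ i, ((z i : ℝ)) ^ 2) ≤ β ∧
      A.mulVec (fun i => ((z i : ZMod q))) = 0 := by
  haveI : NeZero q := ⟨by omega⟩
  set t : ℝ := (q : ℝ) ^ ((n : ℝ) / (m : ℝ)) with ht
  have hq0 : (0:ℝ) < q := by positivity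
  have ht0 : 0 < t := Real.rpow_pos_of_pos hq0 _
  set B : ℕ := ⌊t⌋₊ with hB
  have hBle : (B : ℝ) ≤ t := Nat.floor_le ht0.le
  have htlt : t < (B : ℝ) + 1 := Nat.lt_floor_add_one t
  -- q^n < (B+1)^m
  have hpow : (q : ℝ) ^ (n : ℕ) < ((B : ℝ) + 1) ^ (m : ℕ) := by
    have : t ^ (m : ℕ) = (q:ℝ) ^ (n:ℕ) := by
      rw [ht, ← Real.rpow_natCast ((q:ℝ) ^ ((n:ℝ)/(m:ℝ))) m, ← Real.rpow_mul hq0.le,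
        div_mul_cancel₀, Real.rpow_natCast]
      exact_mod_cast hm.ne'
    rw [← this]
    exact pow_lt_pow_left₀ htlt ht0.le (by exact_mod_cast hm.ne')
  have hcard : Fintype.card (Fin n → ZMod q) < Fintype.card (Fin m → Fin (B+1)) := by
    simp only [Fintype.card_fun, Fintype.card_fin, ZMod.card]
    exact_mod_cast (by push_cast; exact hpow : ((q:ℝ))^n < ((B+1:ℕ):ℝ)^m)
  obtain ⟨x, y, hxy, hfxy⟩ := Fintype.exists_ne_map_eq_of_card_lt
    (fun v : Fin m → Fin (B+1) => A.mulVec (fun i => ((v i : ℕ) : ZMod q))) hcard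
  refine ⟨fun i => (x i : ℤ) - (y i : ℤ), ?_, ?_, ?_⟩
  · intro h
    apply hxy
    funext i
    have := congrFun h i
    simp only [Pi.zero_apply, sub_eq_zero] at this
    exact Fin.ext (by exact_mod_cast this)
  · have hsum : (∑ i, (((x i : ℤ) - (y i : ℤ) : ℤ) : ℝ) ^ 2) ≤ (m : ℝ) * t ^ 2 := by
      have : ∀ i : Fin m, (((x i : ℤ) - (y i : ℤ) : ℤ) : ℝ) ^ 2 ≤ t ^ 2 := by
        intro i
        have hx : ((x i : ℕ) : ℝ) ≤ B := by exact_mod_cast Nat.lt_succ_iff.mp (x i).isLt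
        have hy : ((y i : ℕ) : ℝ) ≤ B := by exact_mod_cast Nat.lt_succ_iff.mp (y i).isLt
        have habs : |(((x i : ℤ) - (y i : ℤ) : ℤ) : ℝ)| ≤ t := by
          push_cast
          rw [abs_sub_le_iff]
          constructor <;> nlinarith [Nat.cast_nonneg (α := ℝ) (x i : ℕ),
            Nat.cast_nonneg (α := ℝ) (y i : ℕ)]
        calc (((x i : ℤ) - (y i : ℤ) : ℤ) : ℝ) ^ 2
            = |(((x i : ℤ) - (y i : ℤ) : ℤ) : ℝ)| ^ 2 := (sq_abs _).symm
          _ ≤ t ^ 2 := by nlinarith [abs_nonneg (((x i : ℤ) - (y i : ℤ) : ℤ) : ℝ)]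
      calc (∑ i, (((x i : ℤ) - (y i : ℤ) : ℤ) : ℝ) ^ 2) ≤ ∑ _i : Fin m, t ^ 2 :=
            Finset.sum_le_sum fun i _ => this i
        _ = (m : ℝ) * t ^ 2 := by simp [mul_comm]
    calc Real.sqrt (∑ i, (((x i : ℤ) - (y i : ℤ) : ℤ) : ℝ) ^ 2)
        ≤ Real.sqrt ((m : ℝ) * t ^ 2) := Real.sqrt_le_sqrt hsum
      _ = Real.sqrt m * t := by
          rw [Real.sqrt_mul (by positivity), Real.sqrt_sq ht0.le]
      _ ≤ β := hβ
  · have : (fun i => (((x i : ℤ) - (y i : ℤ) : ℤ) : ZMod q))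
        = (fun i => ((x i : ℕ) : ZMod q)) - (fun i => ((y i : ℕ) : ZMod q)) := by
      funext i; simp only [Pi.sub_apply]; push_cast; ring
    rw [this, Matrix.mulVec_sub, hfxy, sub_self]
end

section
/- Let q be a prime, n ≥ 2 an integer, and Q a positive integer with Q < q. Let h* ∈ Z_q^n be nonzero, and let h^(1), …, h^(Q) ∈ Z_q^n be nonzero vectors, each distinct from h*. Let N be the number of vectors x ∈ Z_q^n such that 1 + ⟨x,h*⟩ = 0 and, for every j ∈ {1,…,Q}, 1 + ⟨x,h^(j)⟩ ≠ 0. Then q^{n−1} − Q·q^{n−2} ≤ N ≤ q^{n−1}. (Equivalently, for a uniformly random key x ∈ Z_q^n, the non-abort probability of the Waters hash family lies between (1/q)(1 − Q/q) and 1/q, i.e., the family H_{Wat} = {H_x(h) = 1 + Σ_i x_i h_i} is (Q, (1/q)(1−Q/q), 1/q) abort-resistant.) -/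
/-!
The keys with `1 + ⟨x, h*⟩ = 0` form the fibre over `-1` of the nonzero functional `⟨·, h*⟩`, an
affine hyperplane with `q ^ (n - 1)` points. Such a key aborts only if also `⟨x, h⁽ʲ⁾⟩ = -1` for
some `j`. Two distinct functionals `f ≠ g` taking the same nonzero value at a point `x₀` are not
proportional: `x₀` lies in the hyperplane `ker (g - f)` but not in `ker f ⊓ ker g`. So the keys
with `f x = g x = -1` form an affine subspace of codimension at least `2`, of size at most
`q ^ (n - 2)`, and a union bound over the `Q` indices `j` gives the lower bound.
-/

open Finset Module LinearMap

theorem Finset.card_sub_sum_card_filter_le_card_filter_forall_not {α ι : Type*} [Fintype ι]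
    (s : Finset α) (p : ι → α → Prop) [∀ j, DecidablePred (p j)]
    [DecidablePred fun x => ∀ j, ¬ p j x] :
    #s - ∑ j, #(s.filter (p j)) ≤ #(s.filter fun x => ∀ j, ¬ p j x) := by
  classical
  have hcover : s ⊆ s.filter (fun x => ∀ j, ¬ p j x) ∪ univ.biUnion fun j => s.filter (p j) := by
    intro x hx
    by_cases hp : ∀ j, ¬ p j x
    · exact mem_union_left _ (mem_filter.mpr ⟨hx, hp⟩)
    · obtain ⟨j, hj⟩ := not_forall_not.mp hp
      exact mem_union_right _ (mem_biUnion.mpr ⟨j, mem_univ j, mem_filter.mpr ⟨hx, hj⟩⟩)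
  have := (card_le_card hcover).trans
    ((card_union_le _ _).trans (Nat.add_le_add_left card_biUnion_le _))
  omega

theorem Module.Dual.finrank_ker_inf_ker_lt {K V : Type*} [Field K] [AddCommGroup V]
    [Module K V] [FiniteDimensional K V] {f g : Dual K V} (hfg : f ≠ g) {x : V}
    (hx : f x = g x) (hfx : f x ≠ 0) : finrank K ↥(ker f ⊓ ker g) < finrank K V - 1 := by
  have hlt : ker f ⊓ ker g < ker (g - f) := by
    refine SetLike.lt_iff_le_and_exists.mpr
      ⟨fun y hy => ?_, x, ?_, fun hx' => hfx (Submodule.mem_inf.mp hx').1⟩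
    · simp_all
    · simp [hx]
  rw [← finrank_ker_add_one_of_ne_zero (sub_ne_zero.mpr hfg.symm), Nat.add_sub_cancel]
  exact Submodule.finrank_lt_finrank_of_lt hlt

section FiniteField

variable {K V : Type*} [Field K] [Fintype K] [AddCommGroup V] [Module K V] [Fintype V]

theorem LinearMap.card_filter_apply_eq_of_mem_range {W : Type*} [AddCommGroup W] [Module K W]
    [DecidableEq W] (f : V →ₗ[K] W) {b : W} (hb : b ∈ Set.range f) :
    #{x | f x = b} = Fintype.card K ^ finrank K (ker f) := by
  classical
  rw [AddMonoidHom.card_fiber_eq_of_mem_range f hb ⟨0, map_zero f⟩, ← Module.card_eq_pow_finrank,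
    ← Fintype.card_subtype]
  exact Fintype.card_congr (Equiv.refl _)

namespace Module.Dual

variable [DecidableEq K]

theorem card_filter_apply_eq {f : Dual K V} (hf : f ≠ 0) (b : K) :
    #{x | f x = b} = Fintype.card K ^ (finrank K V - 1) := by
  rw [f.card_filter_apply_eq_of_mem_range (LinearMap.surjective hf b),
    ← finrank_ker_add_one_of_ne_zero hf, Nat.add_sub_cancel]

theorem card_filter_apply_eq_and_apply_eq_le {f g : Dual K V} (hfg : f ≠ g) {b : K}
    (hb : b ≠ 0) : #{x | f x = b ∧ g x = b} ≤ Fintype.card K ^ (finrank K V - 2) := by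
  rcases (univ.filter fun x => f x = b ∧ g x = b).eq_empty_or_nonempty with hempty | ⟨x₀, hx₀⟩
  · simp [hempty]
  obtain ⟨hfx₀, hgx₀⟩ := (mem_filter.mp hx₀).2
  have hfiber : #{x | f x = b ∧ g x = b} = Fintype.card K ^ finrank K ↥(ker f ⊓ ker g) := by
    rw [← ker_prod, ← (f.prod g).card_filter_apply_eq_of_mem_range (b := (b, b))
      ⟨x₀, by simp [hfx₀, hgx₀]⟩]
    simp [Prod.ext_iff]
  rw [hfiber]
  have hrank := finrank_ker_inf_ker_lt hfg (hfx₀.trans hgx₀.symm) (hfx₀ ▸ hb)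
  exact Nat.pow_le_pow_right Fintype.card_pos (by omega)

end Module.Dual

end FiniteField

theorem waters_hash_abort_resistant_general
    (q n Q : ℕ) [Fact q.Prime]
    (hstar : Fin n → ZMod q) (hhstar : hstar ≠ 0)
    (h : Fin Q → Fin n → ZMod q) (hne : ∀ j, h j ≠ hstar) :
    q ^ (n - 1) - Q * q ^ (n - 2) ≤
      (Finset.univ.filter
        (fun x : Fin n → ZMod q =>
          1 + ∑ i, x i * hstar i = 0 ∧ ∀ j, 1 + ∑ i, x i * h j i ≠ 0)).card ∧
    (Finset.univ.filter
        (fun x : Fin n → ZMod q =>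
          1 + ∑ i, x i * hstar i = 0 ∧ ∀ j, 1 + ∑ i, x i * h j i ≠ 0)).card ≤
      q ^ (n - 1) := by
  set φ := dotProductEquiv (ZMod q) (Fin n)
  have hφ (a x : Fin n → ZMod q) : 1 + ∑ i, x i * a i = 0 ↔ φ a x = -1 := by
    rw [add_eq_zero_iff_eq_neg', dotProductEquiv_apply_apply, dotProduct_comm]
    rfl
  simp only [ne_eq, hφ, ← filter_filter]
  have hS : #{x | φ hstar x = -1} = q ^ (n - 1) := by
    rw [Dual.card_filter_apply_eq (φ.map_ne_zero_iff.mpr hhstar), ZMod.card, finrank_fin_fun]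
  have hSj (j : Fin Q) : #{x | φ hstar x = -1 ∧ φ (h j) x = -1} ≤ q ^ (n - 2) := by
    simpa [ZMod.card] using Dual.card_filter_apply_eq_and_apply_eq_le
      (φ.injective.ne (hne j)).symm (neg_ne_zero.mpr one_ne_zero)
  refine ⟨?_, (card_filter_le _ _).trans hS.le⟩
  have hsum : ∑ j, #((univ.filter fun x => φ hstar x = -1).filter (φ (h j) · = -1))
      ≤ Q * q ^ (n - 2) := by
    simpa [filter_filter] using sum_le_sum fun j (_ : j ∈ univ) => hSj j
  calc q ^ (n - 1) - Q * q ^ (n - 2)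
      ≤ #{x | φ hstar x = -1}
          - ∑ j, #((univ.filter fun x => φ hstar x = -1).filter (φ (h j) · = -1)) := by
        omega
    _ ≤ _ := card_sub_sum_card_filter_le_card_filter_forall_not _ _

/-- The Waters hash family is (Q, (1/q)(1−Q/q), 1/q) abort-resistant:
for a prime q, n ≥ 2, 0 < Q < q, a nonzero h* ∈ Z_q^n, and nonzero vectors
h^(1), …, h^(Q) each distinct from h*, the number N of keys x ∈ Z_q^n with
1 + ⟨x,h*⟩ = 0 and 1 + ⟨x,h^(j)⟩ ≠ 0 for all j satisfies
q^(n−1) − Q·q^(n−2) ≤ N ≤ q^(n−1). -/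
theorem waters_hash_abort_resistant
    (q n Q : ℕ) [Fact q.Prime] (hn : 2 ≤ n) (hQpos : 0 < Q) (hQ : Q < q)
    (hstar : Fin n → ZMod q) (hhstar : hstar ≠ 0)
    (h : Fin Q → Fin n → ZMod q) (hh : ∀ j, h j ≠ 0) (hne : ∀ j, h j ≠ hstar) :
    q ^ (n - 1) - Q * q ^ (n - 2) ≤
      (Finset.univ.filter
        (fun x : Fin n → ZMod q =>
          1 + ∑ i, x i * hstar i = 0 ∧ ∀ j, 1 + ∑ i, x i * h j i ≠ 0)).card ∧
    (Finset.univ.filter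
        (fun x : Fin n → ZMod q =>
          1 + ∑ i, x i * hstar i = 0 ∧ ∀ j, 1 + ∑ i, x i * h j i ≠ 0)).card ≤
      q ^ (n - 1) :=
  waters_hash_abort_resistant_general q n Q hstar hhstar h hne
end

section
/- Let q ≥ 3 be an odd integer, let μ ∈ {0,1}, and let x ∈ ℤ satisfy 4·|x| ≤ q − 2. Let c ∈ Z_q be the reduction modulo q of x + μ·⌊q/2⌋, and let r ∈ {0, 1, …, q−1} be the canonical representative of c. Then the inequalities q < 4r and 4r < 3q both hold if and only if μ = 1. Consequently, the decoder that outputs 1 when q < 4r < 3q and 0 otherwise recovers the bit μ from c. -/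
/-- For odd q ≥ 3, a bit μ ∈ {0,1}, and noise x ∈ ℤ with 4·|x| ≤ q − 2,
letting c = (x + μ·⌊q/2⌋) mod q with canonical representative r ∈ {0,…,q−1},
we have (q < 4r ∧ 4r < 3q) ↔ μ = 1.  Hence the rounding decoder recovers μ. -/
theorem round_decoder_recovers_bit
    (q : ℕ) (hq : 3 ≤ q) (hodd : Odd q)
    (μ : ℤ) (hμ : μ = 0 ∨ μ = 1)
    (x : ℤ) (hx : 4 * |x| ≤ (q : ℤ) - 2)
    (c : ZMod q) (hc : c = ((x + μ * ((q : ℤ) / 2) : ℤ) : ZMod q))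
    (r : ℕ) (hr : r = c.val) :
    (q < 4 * r ∧ 4 * r < 3 * q) ↔ μ = 1 := by
  haveI : NeZero q := ⟨by omega⟩
  obtain ⟨k, hk⟩ := hodd
  have hkz : (q : ℤ) = 2 * k + 1 := by exact_mod_cast hk
  have hq2 : (q : ℤ) / 2 = k := by omega
  have habs : -((q : ℤ) - 2) ≤ 4 * x ∧ 4 * x ≤ (q : ℤ) - 2 :=
    ⟨by linarith [neg_abs_le x], by linarith [le_abs_self x]⟩
  have hrz : (r : ℤ) = (x + μ * ((q : ℤ) / 2)) % (q : ℤ) := by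
    rw [hr, hc]
    exact_mod_cast ZMod.val_intCast _
  rw [hq2] at hrz
  rcases hμ with hμ | hμ
  · subst hμ
    simp only [zero_mul, add_zero] at hrz
    have hxx : x % (q : ℤ) = x ∨ x % (q : ℤ) = x + q := by
      rcases le_or_gt 0 x with h | h
      · left; exact Int.emod_eq_of_lt h (by omega)
      · right
        have h2 : (x + (q:ℤ)) % (q:ℤ) = x + (q:ℤ) :=
          Int.emod_eq_of_lt (by omega) (by omega)
        rw [← Int.add_mul_emod_self_right (b := 1) (c := (q:ℤ))]
        simpa using h2
    constructor
    · rintro ⟨h1, h2⟩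
      exfalso
      have h1' : (q : ℤ) < 4 * r := by exact_mod_cast h1
      have h2' : 4 * (r : ℤ) < 3 * q := by exact_mod_cast h2
      omega
    · intro h; exact absurd h (by norm_num)
  · subst hμ
    simp only [one_mul] at hrz
    have heq : (x + k) % (q : ℤ) = x + k := Int.emod_eq_of_lt (by omega) (by omega)
    rw [heq] at hrz
    constructor
    · intro _; rfl
    · intro _
      constructor
      · have : (q : ℤ) < 4 * r := by omega
        exact_mod_cast this
      · have : 4 * (r : ℤ) < 3 * q := by exact_mod_cast (by omega : 4 * (r:ℤ) < 3 * (q:ℤ))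
        exact_mod_cast this
end
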